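/- arXiv:2604.16129 — 2 statements merged into one kernel-verified Lean document; each statement's English description precedes it below -/
import Mathlib

section
/- In the Plackett–Luce model on a finite set e with scores s : e → ℝ, the probability that item a ∈ e is ranked first equals exp(s_a) / ∑_{b ∈ e} exp(s_b). -/
open scoped BigOperators

/-- Plackett–Luce probability of a ranking `π : Fin m → ι` under scores `s`. -/
noncomputable def PLProb {ι : Type*} {m : ℕ} (s : ι → ℝ) (π : Fin m → ι) : ℝ :=
  ∏ j : Fin m, Real.exp (s (π j)) / ∑ t ∈ Finset.Ici j, Real.exp (s (π t))

/-!
Peeling off the first factor, the Plackett–Luce probability of a ranking `π` of `α` is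
`exp (s (π 0)) / ∑ b, exp (s b)` times the Plackett–Luce probability of the remaining ranking
of `α \ {π 0}`. Rankings with `π 0 = a` correspond bijectively to rankings of `α \ {a}`, so the
probability that `a` comes first is `exp (s a) / ∑ b, exp (s b)` times the total mass of the
Plackett–Luce model on `α \ {a}`, and that total mass is `1` by induction on the size of the
ground set.
-/

open Finset

section
variable {ι : Type*} {n : ℕ} (s : ι → ℝ)

lemma PLProb_zero (π : Fin 0 → ι) : PLProb s π = 1 :=
  Fintype.prod_empty _

lemma PLProb_succ (π : Fin (n + 1) → ι) :
    PLProb s π =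
      Real.exp (s (π 0)) / (∑ j, Real.exp (s (π j))) * PLProb s (fun j => π j.succ) := by
  rw [PLProb, Fin.prod_univ_succ, show Ici (0 : Fin (n + 1)) = univ from Ici_bot]
  simp only [Fin.sum_Ici_succ]
  rfl

lemma PLProb_equiv_succ {α : Type*} [Fintype α] (s : α → ℝ) (π : Fin (n + 1) ≃ α) :
    PLProb s π =
      Real.exp (s (π 0)) / (∑ b, Real.exp (s b)) * PLProb s (fun j => π j.succ) := by
  rw [PLProb_succ, π.sum_comp (fun b => Real.exp (s b))]

end

section
variable {α : Type*} [DecidableEq α] {n : ℕ}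

def rankingsWithFirstEquiv (a : α) :
    {π : Fin (n + 1) ≃ α // π 0 = a} ≃ (Fin n ≃ {b // b ≠ a}) :=
  ((finSuccEquiv n).equivCongr (Equiv.refl α)).subtypeEquiv (by simp) |>.trans
    (Equiv.optionSubtype a)

@[simp]
lemma coe_rankingsWithFirstEquiv_apply (a : α) (π : {π : Fin (n + 1) ≃ α // π 0 = a})
    (j : Fin n) : (rankingsWithFirstEquiv a π j : α) = π.1 j.succ := by
  simp [rankingsWithFirstEquiv]

end

section
variable {α : Type*} [Fintype α] [DecidableEq α] {n : ℕ} (s : α → ℝ)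

lemma sum_PLProb_filter_zero_eq (a : α) :
    ∑ π ∈ univ.filter (fun π : Fin (n + 1) ≃ α => π 0 = a), PLProb s π =
      Real.exp (s a) / (∑ b, Real.exp (s b)) *
        ∑ σ : Fin n ≃ {b // b ≠ a}, PLProb (fun b : {b // b ≠ a} => s b) σ := by
  rw [sum_subtype (p := fun π => π 0 = a) _ (fun π => by simp), mul_sum]
  refine Fintype.sum_equiv (rankingsWithFirstEquiv a) _ _ fun π => ?_
  rw [PLProb_equiv_succ, π.2]
  simp only [PLProb, coe_rankingsWithFirstEquiv_apply]

theorem sum_PLProb_eq_one (hn : Fintype.card α = n) : ∑ π : Fin n ≃ α, PLProb s π = 1 := by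
  induction n generalizing α with
  | zero =>
    have : IsEmpty α := Fintype.card_eq_zero_iff.1 hn
    simp [PLProb_zero, Fintype.card_equiv (Equiv.equivOfIsEmpty (Fin 0) α)]
  | succ n ih =>
    have : Nonempty α := Fintype.card_pos_iff.1 (by omega)
    have hfiber (a : α) :
        ∑ π ∈ univ.filter (fun π : Fin (n + 1) ≃ α => π 0 = a), PLProb s π =
          Real.exp (s a) / ∑ b, Real.exp (s b) := by
      rw [sum_PLProb_filter_zero_eq, ih _ (by simp [hn]), mul_one]
    rw [← sum_fiberwise univ (fun π : Fin (n + 1) ≃ α => π 0), sum_congr rfl fun a _ => hfiber a,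
      ← sum_div]
    exact div_self (sum_pos (fun b _ => Real.exp_pos _) univ_nonempty).ne'

lemma sum_PLProb_filter_first_eq {m : ℕ} (hm : Fintype.card α = m) (hm₀ : 0 < m) (a : α) :
    ∑ π ∈ univ.filter (fun π : Fin m ≃ α => π ⟨0, hm₀⟩ = a), PLProb s π =
      Real.exp (s a) / ∑ b, Real.exp (s b) := by
  obtain ⟨n, rfl⟩ := Nat.exists_eq_add_one_of_ne_zero hm₀.ne'
  refine (sum_PLProb_filter_zero_eq s a).trans ?_
  rw [sum_PLProb_eq_one _ (by simp [hm]), mul_one]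

end

/-- In the Plackett–Luce model on the finite set `e`, the probability that item
`a ∈ e` is ranked first equals `exp (s a) / ∑ b ∈ e, exp (s b)`. -/
theorem pl_top_one_prob {ι : Type*} [DecidableEq ι] (e : Finset ι) (s : ι → ℝ)
    (a : ι) (ha : a ∈ e) :
    ∑ π ∈ Finset.univ.filter
        (fun π : Fin e.card ≃ {x // x ∈ e} =>
          ((π ⟨0, Finset.card_pos.mpr ⟨a, ha⟩⟩ : {x // x ∈ e}) : ι) = a),
      PLProb (fun x : {x // x ∈ e} => s x.val) (fun j => π j)
      = Real.exp (s a) / ∑ b ∈ e, Real.exp (s b) := by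
  rw [filter_congr fun π _ => (Subtype.ext_iff (a2 := ⟨a, ha⟩)).symm,
    sum_PLProb_filter_first_eq _ (Fintype.card_coe e), sum_coe_sort e (fun b => Real.exp (s b))]
end

section
/- Existence of the constrained MLE in a pairwise setting: Let ℓ(u) = ∑_k log σ(u_{w_k} − u_{l_k}) be the Bradley–Terry log-likelihood over observed outcomes (winner w_k, loser l_k), restricted to the centered space 𝕌^n = {u : ∑ u_i = 0}. Suppose that for every nonzero u ∈ 𝕌^n there exists an observed comparison k with u_{w_k} < u_{l_k}. Then ℓ attains its maximum on 𝕌^n. -/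
open scoped BigOperators

private lemma sig_pos (x : ℝ) : 0 < 1 / (1 + Real.exp (-x)) := by positivity

private lemma logsig_nonpos (x : ℝ) : Real.log (1 / (1 + Real.exp (-x))) ≤ 0 := by
  apply Real.log_nonpos (le_of_lt (sig_pos x))
  rw [div_le_one (by positivity)]
  linarith [Real.exp_pos (-x)]

private lemma logsig_le (x : ℝ) : Real.log (1 / (1 + Real.exp (-x))) ≤ x := by
  rw [one_div, Real.log_inv]
  have h1 : Real.exp (-x) ≤ 1 + Real.exp (-x) := by linarith [Real.exp_pos (-x)]
  have h2 := Real.log_le_log (Real.exp_pos (-x)) h1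
  rw [Real.log_exp] at h2
  linarith

/-- Existence of the constrained Bradley–Terry MLE: if for every nonzero
centered `u` there is an observed comparison whose winner has a strictly
smaller utility than its loser, then the log-likelihood
`ℓ(u) = ∑ₖ log σ(u_{wₖ} - u_{lₖ})` attains its maximum on the centered space. -/
theorem bt_mle_exists (n K : ℕ) (w l : Fin K → Fin n)
    (hsep : ∀ u : Fin n → ℝ, (∑ i, u i = 0) → u ≠ 0 → ∃ k, u (w k) < u (l k)) :
    ∃ u₀ : Fin n → ℝ, (∑ i, u₀ i = 0) ∧
      ∀ u : Fin n → ℝ, (∑ i, u i = 0) →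
        (∑ k, Real.log (1 / (1 + Real.exp (-(u (w k) - u (l k)))))) ≤
        (∑ k, Real.log (1 / (1 + Real.exp (-(u₀ (w k) - u₀ (l k)))))) := by
  classical
  set F : (Fin n → ℝ) → ℝ :=
    fun u => ∑ k, Real.log (1 / (1 + Real.exp (-(u (w k) - u (l k))))) with hFdef
  -- continuity
  have hcont : Continuous F := by
    apply continuous_finset_sum
    intro k _
    have hden : Continuous fun u : Fin n → ℝ => 1 + Real.exp (-(u (w k) - u (l k))) := by
      fun_prop
    have hdiv : Continuous fun u : Fin n → ℝ => 1 / (1 + Real.exp (-(u (w k) - u (l k)))) :=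
      continuous_const.div hden (fun u => by positivity)
    exact hdiv.log (fun u => ne_of_gt (sig_pos _))
  have hFnonpos : ∀ u, F u ≤ 0 := fun u =>
    Finset.sum_nonpos (fun k _ => logsig_nonpos _)
  by_cases hT : ∃ v : Fin n → ℝ, (∑ i, v i = 0) ∧ ‖v‖ = 1
  · obtain ⟨v₁, hv₁s, hv₁n⟩ := hT
    set T : Set (Fin n → ℝ) := {v | (∑ i, v i = 0) ∧ ‖v‖ = 1} with hTdef
    have hTne : T.Nonempty := ⟨v₁, hv₁s, hv₁n⟩
    have hTclosed : IsClosed T := by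
      apply IsClosed.inter
      · exact isClosed_eq (by fun_prop) continuous_const
      · exact isClosed_eq continuous_norm continuous_const
    have hTbdd : Bornology.IsBounded T := by
      rw [isBounded_iff_forall_norm_le]
      exact ⟨1, fun v hv => le_of_eq hv.2⟩
    have hTcomp : IsCompact T := Metric.isCompact_of_isClosed_isBounded hTclosed hTbdd
    set g : (Fin n → ℝ) → ℝ := fun v => ∑ k, max (v (l k) - v (w k)) 0 with hgdef
    have hgcont : Continuous g := by
      apply continuous_finset_sum
      intro k _
      fun_prop
    obtain ⟨v₀, hv₀T, hmin⟩ := hTcomp.exists_isMinOn hTne hgcont.continuousOn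
    have hv₀ne : v₀ ≠ 0 := by
      intro h
      rw [h] at hv₀T
      simp [hTdef] at hv₀T
    obtain ⟨k₀, hk₀⟩ := hsep v₀ hv₀T.1 hv₀ne
    have hK : 0 < K := k₀.pos
    set c : ℝ := g v₀ with hcdef
    have hc : 0 < c := by
      have h1 : max (v₀ (l k₀) - v₀ (w k₀)) 0 ≤ c := by
        apply Finset.single_le_sum (f := fun k => max (v₀ (l k) - v₀ (w k)) 0)
          (fun k _ => le_max_right _ _) (Finset.mem_univ k₀)
      have h2 : (0:ℝ) < max (v₀ (l k₀) - v₀ (w k₀)) 0 :=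
        lt_max_of_lt_left (by linarith)
      linarith
    -- coercivity
    have hcoer : ∀ u : Fin n → ℝ, (∑ i, u i = 0) → u ≠ 0 → F u ≤ -(‖u‖ * c / K) := by
      intro u hu hune
      have hnorm : (0:ℝ) < ‖u‖ := norm_pos_iff.mpr hune
      set v : Fin n → ℝ := ‖u‖⁻¹ • u with hvdef
      have hvT : v ∈ T := by
        constructor
        · simp only [hvdef, Pi.smul_apply, smul_eq_mul, ← Finset.mul_sum, hu, mul_zero]
        · rw [hvdef, norm_smul, norm_inv, norm_norm, inv_mul_cancel₀ (ne_of_gt hnorm)]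
      have hgv : c ≤ g v := hmin hvT
      have hgu : g u = ‖u‖ * g v := by
        rw [hgdef]
        simp only [Finset.mul_sum]
        apply Finset.sum_congr rfl
        intro k _
        rw [hvdef]
        simp only [Pi.smul_apply, smul_eq_mul]
        rw [mul_max_of_nonneg _ _ hnorm.le, mul_zero]
        congr 1
        field_simp
      have hgu' : ‖u‖ * c ≤ g u := by
        rw [hgu]; exact mul_le_mul_of_nonneg_left hgv (le_of_lt hnorm)
      -- find a heavy term
      have hex : ∃ k, ‖u‖ * c / K ≤ max (u (l k) - u (w k)) 0 := by
        by_contra hcon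
        push_neg at hcon
        have : g u < ∑ _k : Fin K, ‖u‖ * c / K := by
          apply Finset.sum_lt_sum_of_nonempty
          · exact Finset.univ_nonempty_iff.mpr ⟨k₀⟩
          · exact fun k _ => hcon k
        rw [Finset.sum_const, Finset.card_univ, Fintype.card_fin, nsmul_eq_mul] at this
        have hKR : (0:ℝ) < (K:ℝ) := by exact_mod_cast hK
        have heq : (K:ℝ) * (‖u‖ * c / K) = ‖u‖ * c := by field_simp
        rw [heq] at this
        linarith
      obtain ⟨k, hk⟩ := hex
      have hpos : 0 < ‖u‖ * c / K := by positivity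
      have hterm : u (w k) - u (l k) ≤ -(‖u‖ * c / K) := by
        rcases le_or_gt (u (l k) - u (w k)) 0 with h | h
        · rw [max_eq_right h] at hk; linarith
        · rw [max_eq_left (le_of_lt h)] at hk; linarith
      calc F u ≤ Real.log (1 / (1 + Real.exp (-(u (w k) - u (l k))))) := by
            rw [hFdef]
            have : ∀ k' ∈ Finset.univ, Real.log (1 / (1 + Real.exp (-(u (w k') - u (l k'))))) ≤
                (if k' = k then Real.log (1 / (1 + Real.exp (-(u (w k') - u (l k'))))) else 0) := by
              intro k' _
              split
              · exact le_refl _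
              · exact logsig_nonpos _
            calc (∑ k', Real.log (1 / (1 + Real.exp (-(u (w k') - u (l k')))))) ≤
                ∑ k', (if k' = k then Real.log (1 / (1 + Real.exp (-(u (w k') - u (l k'))))) else 0) :=
                  Finset.sum_le_sum this
              _ = Real.log (1 / (1 + Real.exp (-(u (w k) - u (l k))))) := by
                  rw [Finset.sum_ite_eq' Finset.univ k]
                  simp
        _ ≤ u (w k) - u (l k) := logsig_le _
        _ ≤ -(‖u‖ * c / K) := hterm
    -- candidate compact set
    set C : Set (Fin n → ℝ) := {u | (∑ i, u i = 0) ∧ F 0 ≤ F u} with hCdef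
    have hCclosed : IsClosed C :=
      IsClosed.inter (isClosed_eq (by fun_prop) continuous_const)
        (isClosed_le continuous_const hcont)
    have hCbdd : Bornology.IsBounded C := by
      rw [isBounded_iff_forall_norm_le]
      refine ⟨K * (-F 0) / c, fun u hu => ?_⟩
      rcases eq_or_ne u 0 with h | h
      · rw [h, norm_zero]
        have h0 : 0 ≤ -F 0 := by linarith [hFnonpos 0]
        exact div_nonneg (mul_nonneg (Nat.cast_nonneg K) h0) hc.le
      · have h1 := hcoer u hu.1 h
        have h2 : F 0 ≤ F u := hu.2
        have h3 : ‖u‖ * c / K ≤ -F 0 := by linarith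
        have hKR : (0:ℝ) < (K:ℝ) := by exact_mod_cast hK
        rw [div_le_iff₀ hKR] at h3
        rw [le_div_iff₀ hc]
        linarith
    have hCcomp : IsCompact C := Metric.isCompact_of_isClosed_isBounded hCclosed hCbdd
    have hCne : C.Nonempty := ⟨0, by simp, le_refl _⟩
    obtain ⟨u₀, hu₀C, hmax⟩ := hCcomp.exists_isMaxOn hCne hcont.continuousOn
    refine ⟨u₀, hu₀C.1, fun u hu => ?_⟩
    rcases le_or_gt (F 0) (F u) with h | h
    · exact hmax ⟨hu, h⟩
    · exact h.le.trans hu₀C.2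
  · -- every centered vector is zero
    have hzero : ∀ u : Fin n → ℝ, (∑ i, u i = 0) → u = 0 := by
      intro u hu
      by_contra h0
      apply hT
      refine ⟨‖u‖⁻¹ • u, ?_, ?_⟩
      · simp only [Pi.smul_apply, smul_eq_mul, ← Finset.mul_sum, hu, mul_zero]
      · rw [norm_smul, norm_inv, norm_norm,
          inv_mul_cancel₀ (norm_ne_zero_iff.mpr h0)]
    refine ⟨0, by simp, fun u hu => ?_⟩
    rw [hzero u hu]
end
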